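/- Let c : ℤ → ℂ be a complex sequence, θ₀ ∈ [0, π/2), and suppose: (4) for every n ≥ 1, both c_n + c_{−n} and c_n − c_{−n} lie in K(θ₀); (2*) there exist a natural number N₀ and a constant M > 0 such that for every m ≥ 1, ∑_{n=m}^{2m} |c_n − c_{n+1}| ≤ M · max_{m ≤ n < m+N₀} |c_n|; (5) lim_{n→∞} n·c_n = 0; and (6) ∑_{n=1}^{∞} |c_n + c_{−n}| < ∞. Then for every x ∈ ℝ the symmetric partial sums ∑_{k=−n}^{n} c_k e^{ikx} form a Cauchy sequence, and hence the series ∑_{k=−∞}^{∞} c_k e^{ikx} converges at every x. -/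

import Mathlib

open Filter Finset

/-- Dirichlet-type test: bounded-variation coefficients tending to zero, summed against
bounded partial geometric sums, give a Cauchy sequence of partial sums. -/
lemma my_dirichlet {a : ℕ → ℂ} {w : ℂ} {B : ℝ}
    (ha0 : Tendsto a atTop (nhds 0))
    (hav : Summable (fun n => ‖a (n + 1) - a n‖))
    (hB : ∀ n, ‖∑ i ∈ range n, w ^ i‖ ≤ B) :
    CauchySeq (fun N => ∑ i ∈ range N, a i * w ^ i) := by
  rw [← cauchySeq_shift 1]
  have key : ∀ N : ℕ, ∑ i ∈ range (N + 1), a i * w ^ i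
      = a N * (∑ i ∈ range (N + 1), w ^ i)
        - ∑ i ∈ range N, (a (i + 1) - a i) * (∑ j ∈ range (i + 1), w ^ j) := by
    intro N
    simpa [smul_eq_mul] using Finset.sum_range_by_parts a (fun i => w ^ i) (N + 1)
  simp_rw [key, sub_eq_add_neg]
  apply CauchySeq.add
  · apply Filter.Tendsto.cauchySeq (x := (0 : ℂ))
    have hb : Filter.IsBoundedUnder (· ≤ ·) atTop
        (fun N => ‖∑ i ∈ range (N + 1), w ^ i‖) :=
      ⟨B, eventually_map.mpr <| Eventually.of_forall fun n => hB (n + 1)⟩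
    exact
      NormedField.tendsto_zero_smul_of_tendsto_zero_of_bounded ha0 hb
  · refine CauchySeq.neg ?_
    refine cauchySeq_range_of_norm_bounded
      ((hav.mul_right B).hasSum.tendsto_sum_nat.cauchySeq) (fun n => ?_)
    rw [norm_mul]
    exact mul_le_mul_of_nonneg_left (hB (n + 1)) (norm_nonneg _)

/-- Partial sums of a geometric series with ratio of norm one (≠ 1) are bounded. -/
lemma my_geom_bound {w : ℂ} (hw : ‖w‖ = 1) (hw1 : w ≠ 1) (n : ℕ) :
    ‖∑ i ∈ range n, w ^ i‖ ≤ 2 / ‖w - 1‖ := by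
  have hw0 : (0:ℝ) < ‖w - 1‖ := by
    rw [norm_pos_iff, sub_ne_zero]; exact hw1
  rw [geom_sum_eq hw1, norm_div]
  gcongr
  calc ‖w ^ n - 1‖ ≤ ‖w ^ n‖ + ‖(1:ℂ)‖ := norm_sub_le _ _
    _ = 2 := by rw [norm_pow, hw]; norm_num

/-- Conditions (2*) and (5) imply that the positive-index coefficients are of
bounded variation. -/
lemma my_bv (c : ℤ → ℂ) (N₀ : ℕ) (hN₀ : 0 < N₀) (M : ℝ) (hM : 0 < M)
    (h2 : ∀ m : ℕ, 1 ≤ m →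
      ∑ n ∈ Finset.Icc m (2 * m), ‖c (n : ℤ) - c ((n : ℤ) + 1)‖ ≤
        M * (Finset.Ico m (m + N₀)).sup' (Finset.nonempty_Ico.mpr (Nat.lt_add_of_pos_right hN₀))
          (fun n => ‖c (n : ℤ)‖))
    (h5 : Tendsto (fun n : ℕ => (n : ℂ) * c (n : ℤ)) atTop (nhds 0)) :
    Summable (fun n : ℕ => ‖c (n : ℤ) - c ((n : ℤ) + 1)‖) := by
  set d : ℕ → ℝ := fun n => ‖c (n : ℤ) - c ((n : ℤ) + 1)‖ with hd
  have hd0 : ∀ n, 0 ≤ d n := fun n => norm_nonneg _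
  obtain ⟨B, hB⟩ : BddAbove (Set.range fun n : ℕ => ‖(n : ℂ) * c (n : ℤ)‖) := by
    have := h5.norm
    rw [norm_zero] at this
    exact this.bddAbove_range
  have hBn : ∀ n : ℕ, (n : ℝ) * ‖c (n : ℤ)‖ ≤ B := by
    intro n
    have := hB (Set.mem_range_self (f := fun n : ℕ => ‖(n : ℂ) * c (n : ℤ)‖) n)
    simpa [norm_mul] using this
  have hB0 : 0 ≤ B := le_trans (by simp) (hBn 0)
  have hc : ∀ n : ℕ, 1 ≤ n → ‖c (n : ℤ)‖ ≤ B / n := by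
    intro n hn
    rw [le_div_iff₀ (by positivity : (0:ℝ) < (n:ℝ))]
    calc ‖c (n : ℤ)‖ * n = (n : ℝ) * ‖c (n : ℤ)‖ := by ring
    _ ≤ B := hBn n
  have block : ∀ m : ℕ, 1 ≤ m → ∑ n ∈ Finset.Icc m (2 * m), d n ≤ M * (B / m) := by
    intro m hm
    have h2' := h2 m hm
    refine h2'.trans ?_
    refine mul_le_mul_of_nonneg_left ?_ hM.le
    refine Finset.sup'_le _ _ (fun n hn => ?_)
    rw [Finset.mem_Ico] at hn
    have hn1 : 1 ≤ n := le_trans hm hn.1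
    refine (hc n hn1).trans ?_
    have hm' : (0:ℝ) < m := by exact_mod_cast hm
    have hmn : (m:ℝ) ≤ n := by exact_mod_cast hn.1
    exact div_le_div_of_nonneg_left hB0 hm' hmn
  have dyadic : ∀ J : ℕ, ∑ n ∈ Finset.Ico 1 (2 ^ J), d n ≤ 2 * (M * B) := by
    intro J
    have step : ∑ n ∈ Finset.Ico 1 (2 ^ J), d n ≤ ∑ j ∈ range J, M * B * (1 / 2 : ℝ) ^ j := by
      induction J with
      | zero => simp
      | succ J ih =>
        have h1 : (1 : ℕ) ≤ 2 ^ J := Nat.one_le_two_pow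
        have h2 : (2 : ℕ) ^ J ≤ 2 ^ (J + 1) := by
          exact Nat.pow_le_pow_right (by norm_num) (by omega)
        rw [← Finset.sum_Ico_consecutive _ h1 h2, Finset.sum_range_succ]
        refine add_le_add ih ?_
        have hsub : Finset.Ico (2 ^ J) (2 ^ (J + 1)) ⊆ Finset.Icc (2 ^ J) (2 * 2 ^ J) := by
          intro n hn
          rw [Finset.mem_Ico] at hn
          rw [Finset.mem_Icc]
          constructor
          · exact hn.1
          · have := hn.2
            rw [pow_succ] at this
            omega
        calc ∑ n ∈ Finset.Ico (2 ^ J) (2 ^ (J + 1)), d n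
            ≤ ∑ n ∈ Finset.Icc (2 ^ J) (2 * 2 ^ J), d n :=
              Finset.sum_le_sum_of_subset_of_nonneg hsub (fun i _ _ => hd0 i)
          _ ≤ M * (B / ((2 ^ J : ℕ) : ℝ)) := block _ Nat.one_le_two_pow
          _ = M * B * (1 / 2 : ℝ) ^ J := by
              push_cast
              rw [one_div, inv_pow]
              ring
    refine step.trans ?_
    rw [← mul_sum]
    calc M * B * ∑ j ∈ range J, (1 / 2 : ℝ) ^ j
        ≤ M * B * 2 := mul_le_mul_of_nonneg_left (sum_geometric_two_le J) (by positivity)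
      _ = 2 * (M * B) := by ring
  apply summable_of_sum_range_le (c := d 0 + 2 * (M * B)) hd0
  intro N
  match N with
  | 0 => simp; positivity
  | (N + 1) =>
    rw [range_eq_Ico, Finset.sum_eq_sum_Ico_succ_bot (Nat.succ_pos N)]
    refine add_le_add_right ?_ _
    calc ∑ n ∈ Finset.Ico 1 (N + 1), d n
        ≤ ∑ n ∈ Finset.Ico 1 (2 ^ (N + 1)), d n := by
          refine Finset.sum_le_sum_of_subset_of_nonneg ?_ (fun i _ _ => hd0 i)
          apply Finset.Ico_subset_Ico le_rfl
          exact (Nat.lt_two_pow_self (n := N + 1)).le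
      _ ≤ 2 * (M * B) := dyadic (N + 1)

/-- In the proof of sufficiency of Theorem 1: under conditions (4), (2*), (5) and (6),
for every `x` the symmetric partial sums form a Cauchy sequence, hence the
trigonometric series converges at every `x`. -/
theorem partial_sums_cauchy (c : ℤ → ℂ) (θ₀ : ℝ) (hθ₀ : 0 ≤ θ₀) (hθ₁ : θ₀ < Real.pi / 2)
    (h4 : ∀ n : ℤ, 1 ≤ n →
      |(c n + c (-n)).arg| ≤ θ₀ ∧ |(c n - c (-n)).arg| ≤ θ₀)
    (h2star : ∃ N₀ : ℕ, ∃ hN₀ : 0 < N₀, ∃ M : ℝ, 0 < M ∧ ∀ m : ℕ, 1 ≤ m →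
      ∑ n ∈ Finset.Icc m (2 * m), ‖c (n : ℤ) - c ((n : ℤ) + 1)‖ ≤
        M * (Finset.Ico m (m + N₀)).sup' (Finset.nonempty_Ico.mpr (by omega))
          (fun n => ‖c (n : ℤ)‖))
    (h5 : Tendsto (fun n : ℕ => (n : ℂ) * c (n : ℤ)) atTop (nhds 0))
    (h6 : Summable (fun n : ℕ => ‖c ((n : ℤ) + 1) + c (-((n : ℤ) + 1))‖)) :
    ∀ x : ℝ,
      CauchySeq (fun n : ℕ =>
        ∑ k ∈ Finset.Icc (-(n : ℤ)) (n : ℤ), c k * Complex.exp ((k : ℂ) * (x : ℂ) * Complex.I)) ∧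
      ∃ l : ℂ, Tendsto (fun n : ℕ =>
        ∑ k ∈ Finset.Icc (-(n : ℤ)) (n : ℤ), c k * Complex.exp ((k : ℂ) * (x : ℂ) * Complex.I))
        atTop (nhds l) := by
  obtain ⟨N₀, hN₀, M, hM, h2⟩ := h2star
  -- bounded variation of the positive-index coefficients
  have hbv : Summable (fun n : ℕ => ‖c (n : ℤ) - c ((n : ℤ) + 1)‖) :=
    my_bv c N₀ hN₀ M hM h2 h5
  have hav : Summable (fun n : ℕ => ‖c ((n + 1 : ℕ) : ℤ) - c ((n : ℕ) : ℤ)‖) := by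
    refine hbv.congr (fun n => ?_)
    have hcast : ((n + 1 : ℕ) : ℤ) = (n : ℤ) + 1 := by push_cast; ring
    rw [hcast, norm_sub_rev]
  -- the coefficients tend to zero
  have hc0 : Tendsto (fun n : ℕ => c (n : ℤ)) atTop (nhds 0) := by
    have h5n : Tendsto (fun n : ℕ => ‖(n : ℂ) * c (n : ℤ)‖) atTop (nhds 0) := by
      have := h5.norm; rwa [norm_zero] at this
    apply squeeze_zero_norm' ?_ h5n
    filter_upwards [eventually_ge_atTop 1] with n hn
    rw [norm_mul, Complex.norm_natCast]
    nlinarith [norm_nonneg (c (n : ℤ)), (by exact_mod_cast hn : (1:ℝ) ≤ (n:ℝ))]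
  -- summability of the symmetric sums, in norm
  have h6' : Summable (fun n : ℕ => c ((n : ℤ) + 1) + c (-((n : ℤ) + 1))) := by
    apply Summable.of_norm
    exact h6
  intro x
  set z : ℂ := Complex.exp ((x : ℂ) * Complex.I) with hzdef
  have hz1 : ‖z‖ = 1 := by
    rw [hzdef, Complex.norm_exp]
    simp
  have hexp : ∀ k : ℤ, Complex.exp ((k : ℂ) * (x : ℂ) * Complex.I) = z ^ k := by
    intro k
    rw [mul_assoc, Complex.exp_int_mul]
  -- the symmetric partial sum in closed form
  have hS : ∀ N : ℕ, ∑ k ∈ Finset.Icc (-(N : ℤ)) (N : ℤ), c k * z ^ k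
      = c 0 + ∑ n ∈ range N,
          (c ((n : ℤ) + 1) * z ^ ((n : ℤ) + 1) + c (-((n : ℤ) + 1)) * z ^ (-((n : ℤ) + 1))) := by
    intro N
    induction N with
    | zero => simp
    | succ N ih =>
      have e1 : Finset.Icc (-((N + 1 : ℕ) : ℤ)) ((N + 1 : ℕ) : ℤ)
          = insert (-((N : ℤ) + 1)) (insert ((N : ℤ) + 1) (Finset.Icc (-(N : ℤ)) (N : ℤ))) := by
        ext k
        simp only [Finset.mem_Icc, Finset.mem_insert]
        push_cast
        omega
      have m1 : (-((N : ℤ) + 1)) ∉ insert ((N : ℤ) + 1) (Finset.Icc (-(N : ℤ)) (N : ℤ)) := by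
        simp only [Finset.mem_insert, Finset.mem_Icc]
        omega
      have m2 : ((N : ℤ) + 1) ∉ Finset.Icc (-(N : ℤ)) (N : ℤ) := by
        simp only [Finset.mem_Icc]
        omega
      rw [e1, Finset.sum_insert m1, Finset.sum_insert m2, ih, Finset.sum_range_succ]
      ring
  have key : ∃ l : ℂ, Tendsto (fun N : ℕ => c 0 + ∑ n ∈ range N,
      (c ((n : ℤ) + 1) * z ^ ((n : ℤ) + 1) + c (-((n : ℤ) + 1)) * z ^ (-((n : ℤ) + 1))))
      atTop (nhds l) := by
    by_cases hz : z = 1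
    · -- at x ≡ 0 (mod 2π) the series telescopes into the absolutely convergent one
      refine ⟨c 0 + ∑' n : ℕ, (c ((n : ℤ) + 1) + c (-((n : ℤ) + 1))), ?_⟩
      have := (tendsto_const_nhds (x := c 0) (f := atTop)).add h6'.hasSum.tendsto_sum_nat
      simpa only [hz, one_zpow, mul_one] using this
    · -- otherwise use the Dirichlet test on both halves
      have hzinv1 : z⁻¹ ≠ 1 := by
        simpa [inv_eq_one] using hz
      have hzinvn : ‖z⁻¹‖ = 1 := by rw [norm_inv, hz1]; norm_num
      obtain ⟨P, hP⟩ := cauchySeq_tendsto_of_complete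
        (my_dirichlet hc0 hav (my_geom_bound hz1 hz))
      obtain ⟨Q, hQ⟩ := cauchySeq_tendsto_of_complete
        (my_dirichlet hc0 hav (my_geom_bound hzinvn hzinv1))
      have hU : Summable (fun n : ℕ =>
          (c ((n : ℤ) + 1) + c (-((n : ℤ) + 1))) * (z⁻¹) ^ (n + 1)) := by
        apply Summable.of_norm
        refine h6'.norm.congr (fun n => ?_)
        rw [norm_mul, norm_pow, hzinvn, one_pow, mul_one]
      have hUt := hU.hasSum.tendsto_sum_nat
      -- pointwise algebraic identity
      have point : ∀ n : ℕ,
          c ((n : ℤ) + 1) * z ^ ((n : ℤ) + 1) + c (-((n : ℤ) + 1)) * z ^ (-((n : ℤ) + 1))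
          = c (((n + 1 : ℕ)) : ℤ) * z ^ (n + 1)
            + ((c ((n : ℤ) + 1) + c (-((n : ℤ) + 1))) * (z⁻¹) ^ (n + 1)
              - c (((n + 1 : ℕ)) : ℤ) * (z⁻¹) ^ (n + 1)) := by
        intro n
        have hcast : ((n : ℤ) + 1) = (((n + 1 : ℕ)) : ℤ) := by push_cast; ring
        have e1 : z ^ ((n : ℤ) + 1) = z ^ (n + 1) := by
          rw [hcast, zpow_natCast]
        have e2 : z ^ (-((n : ℤ) + 1)) = (z⁻¹) ^ (n + 1) := by
          rw [zpow_neg, hcast, zpow_natCast, inv_pow]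
        rw [e1, e2, hcast]
        ring
      have identity : ∀ N : ℕ, c 0 + ∑ n ∈ range N,
          (c ((n : ℤ) + 1) * z ^ ((n : ℤ) + 1) + c (-((n : ℤ) + 1)) * z ^ (-((n : ℤ) + 1)))
          = (∑ i ∈ range (N + 1), c (i : ℤ) * z ^ i)
            + (∑ n ∈ range N, (c ((n : ℤ) + 1) + c (-((n : ℤ) + 1))) * (z⁻¹) ^ (n + 1))
            - (∑ i ∈ range (N + 1), c (i : ℤ) * (z⁻¹) ^ i) + c 0 := by
        intro N
        rw [Finset.sum_congr rfl (fun n _ => point n), Finset.sum_add_distrib,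
          Finset.sum_sub_distrib,
          Finset.sum_range_succ' (fun i => c (i : ℤ) * z ^ i) N,
          Finset.sum_range_succ' (fun i => c (i : ℤ) * (z⁻¹) ^ i) N]
        push_cast
        ring
      refine ⟨P + (∑' n : ℕ, (c ((n : ℤ) + 1) + c (-((n : ℤ) + 1))) * (z⁻¹) ^ (n + 1)) - Q + c 0, ?_⟩
      have hPs : Tendsto (fun N : ℕ => ∑ i ∈ range (N + 1), c (i : ℤ) * z ^ i)
          atTop (nhds P) := hP.comp (tendsto_add_atTop_nat 1)
      have hQs : Tendsto (fun N : ℕ => ∑ i ∈ range (N + 1), c (i : ℤ) * (z⁻¹) ^ i)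
          atTop (nhds Q) := hQ.comp (tendsto_add_atTop_nat 1)
      have := ((hPs.add hUt).sub hQs).add_const (c 0)
      refine Tendsto.congr (fun N => (identity N).symm) this
  obtain ⟨l, hl⟩ := key
  have hl' : Tendsto (fun n : ℕ =>
      ∑ k ∈ Finset.Icc (-(n : ℤ)) (n : ℤ), c k * Complex.exp ((k : ℂ) * (x : ℂ) * Complex.I))
      atTop (nhds l) := by
    refine Tendsto.congr (fun N => ?_) hl
    rw [← hS N]
    exact Finset.sum_congr rfl (fun k _ => by rw [hexp k])
  exact ⟨hl'.cauchySeq, l, hl'⟩
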